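/- arXiv:2508.17546 — 2 statements merged into one kernel-verified Lean document; each statement's English description precedes it below -/
import Mathlib

section
/- Under the weak degeneracy hypotheses on a, the function x ↦ x/√(a(x)) is bounded above on (0,1] by 1/√(a(1)). -/
open Real Set

/-- Under the weak degeneracy hypotheses on `a`, the function `x ↦ x / √(a x)`
is bounded above on `(0,1]` by `1 / √(a 1)`. -/
theorem stmt_1 (a a' : ℝ → ℝ) (K : ℝ)
    (hK0 : 0 ≤ K) (hK1 : K < 1)
    (ha_cont : ContinuousOn a (Icc 0 1))
    (ha_deriv : ∀ x ∈ Ioc (0:ℝ) 1, HasDerivAt a (a' x) x)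
    (ha'_cont : ContinuousOn a' (Ioc 0 1))
    (ha0 : a 0 = 0)
    (ha_pos : ∀ x ∈ Ioc (0:ℝ) 1, 0 < a x)
    (ha'_nonneg : ∀ x ∈ Ioc (0:ℝ) 1, 0 ≤ a' x)
    (hKa : ∀ x ∈ Ioc (0:ℝ) 1, x * a' x ≤ K * a x) :
    ∀ x ∈ Ioc (0:ℝ) 1, x / Real.sqrt (a x) ≤ 1 / Real.sqrt (a 1) := by
  set f : ℝ → ℝ := fun x => a x * x ^ (-K) with hf
  -- f is antitone on (0,1]
  have hderiv : ∀ x ∈ Ioo (0:ℝ) 1,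
      HasDerivAt f (a' x * x ^ (-K) + a x * (-K * x ^ (-K - 1))) x := by
    intro x hx
    have hx' : x ∈ Ioc (0:ℝ) 1 := ⟨hx.1, hx.2.le⟩
    exact (ha_deriv x hx').mul (Real.hasDerivAt_rpow_const (Or.inl hx.1.ne'))
  have hanti : AntitoneOn f (Ioc 0 1) := by
    have hconv : Convex ℝ (Ioc (0:ℝ) 1) := convex_Ioc 0 1
    have hcont : ContinuousOn f (Ioc 0 1) := by
      apply ContinuousOn.mul
      · exact ha_cont.mono (Ioc_subset_Icc_self)
      · exact ContinuousOn.rpow_const continuousOn_id (fun x hx => Or.inl hx.1.ne')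
    have hint : interior (Ioc (0:ℝ) 1) = Ioo 0 1 := interior_Ioc
    refine AntitoneOn.mono ?_ (le_refl _)
    apply antitoneOn_of_deriv_nonpos hconv hcont
    · intro x hx
      rw [hint] at hx
      exact (hderiv x hx).differentiableAt.differentiableWithinAt
    · intro x hx
      rw [hint] at hx
      rw [(hderiv x hx).deriv]
      have hx' : x ∈ Ioc (0:ℝ) 1 := ⟨hx.1, hx.2.le⟩
      have hxpos := hx.1
      have h1 : (0:ℝ) < x ^ (-K - 1) := Real.rpow_pos_of_pos hxpos _
      have key : a' x * x ^ (-K) + a x * (-K * x ^ (-K - 1))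
          = x ^ (-K - 1) * (x * a' x - K * a x) := by
        have : x ^ (-K) = x ^ (-K - 1) * x := by
          rw [← Real.rpow_add_one hxpos.ne' (-K - 1)]; ring_nf
        rw [this]; ring
      rw [key]
      have := hKa x hx'
      nlinarith
  -- hence a x ≥ a 1 * x ^ K
  intro x hx
  have hxpos := hx.1
  have hax := ha_pos x hx
  have ha1 := ha_pos 1 ⟨one_pos, le_refl _⟩
  have hfx : f 1 ≤ f x := hanti hx ⟨one_pos, le_refl _⟩ hx.2
  have hxK : (0:ℝ) < x ^ K := Real.rpow_pos_of_pos hxpos _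
  have hkey : a 1 * x ^ K ≤ a x := by
    have h1 : f 1 = a 1 := by simp [hf]
    have h2 : f x = a x * x ^ (-K) := rfl
    rw [h1, h2] at hfx
    have : a 1 * x ^ K ≤ a x * x ^ (-K) * x ^ K := by
      exact mul_le_mul_of_nonneg_right hfx hxK.le
    rwa [mul_assoc, ← Real.rpow_add hxpos, neg_add_cancel, Real.rpow_zero,
      mul_one] at this
  -- x ^ K ≥ x ^ 2
  have hx2 : x ^ (2:ℝ) ≤ x ^ K :=
    Real.rpow_le_rpow_of_exponent_ge hxpos hx.2 (by linarith)
  have hsq : a 1 * x ^ 2 ≤ a x := by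
    have h2 : x ^ (2:ℝ) = x ^ (2:ℕ) := Real.rpow_natCast x 2
    rw [h2] at hx2
    nlinarith
  -- conclude
  rw [div_le_div_iff₀ (Real.sqrt_pos.mpr hax) (Real.sqrt_pos.mpr ha1)]
  have : x * Real.sqrt (a 1) = Real.sqrt (a 1 * x ^ 2) := by
    rw [Real.sqrt_mul ha1.le, Real.sqrt_sq hxpos.le]; ring
  rw [this, one_mul]
  exact Real.sqrt_le_sqrt hsq
end

section
/- Hardy–Poincaré inequality for weakly degenerate weights: let a satisfy the weak degeneracy hypotheses (a(0)=0, a>0 on (0,1], a'≥0, x a'(x) ≤ K a(x) with K ∈ [0,1)). Then there exists C > 0 such that for every w ∈ C¹([0,1]) with w(0) = 0, ∫₀¹ (a(x)/x²) w(x)² dx ≤ C ∫₀¹ a(x) w'(x)² dx. -/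
open Set intervalIntegral MeasureTheory Filter Topology

/-!
Put `f = a w² / x²` and `G = x f = a w² / x`. Differentiating,
`G' = a' w² / x + 2 a w w' / x - f`; the hypothesis `x a' ≤ K a` bounds the first term by `K f`,
and Young's inequality bounds the second by `δ f + δ⁻¹ a w'²`, so `G' ≤ δ⁻¹ a w'² - (1 - K - δ) f`.
Since `|w x| ≤ M x`, `f` is bounded, so `G` extends continuously by `G 0 = 0`; integrating over
`[0, 1]` and using `G 1 ≥ 0` gives `(1 - K - δ) ∫ f ≤ δ⁻¹ ∫ a w'²`, and `δ = (1 - K) / 2`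
yields the constant `4 / (1 - K)²`.
-/

lemma integrableOn_Icc_of_continuousOn_Ioo_of_abs_le {f : ℝ → ℝ} {a b C : ℝ}
    (hf : ContinuousOn f (Ioo a b)) (hC : ∀ x ∈ Ioo a b, |f x| ≤ C) :
    IntegrableOn f (Icc a b) :=
  (integrableOn_Icc_iff_integrableOn_Ioo).mpr <|
    IntegrableOn.of_bound measure_Ioo_lt_top (hf.aestronglyMeasurable measurableSet_Ioo) C
      ((ae_restrict_iff' measurableSet_Ioo).mpr (ae_of_all _ hC))

lemma continuousOn_Icc_mul_of_abs_le {f : ℝ → ℝ} {b C : ℝ} (hf : ContinuousOn f (Ioc 0 b))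
    (hC : ∀ x ∈ Icc 0 b, |f x| ≤ C) : ContinuousOn (fun x => x * f x) (Icc 0 b) := by
  intro x hx
  rcases hx.1.eq_or_lt with rfl | hx0
  · show Tendsto _ _ (𝓝 (0 * f 0))
    rw [zero_mul]
    refine (tendsto_nhdsWithin_of_tendsto_nhds tendsto_id).zero_mul_isBoundedUnder_le ?_
    exact ⟨C, eventually_map.mpr (eventually_nhdsWithin_of_forall hC)⟩
  · have hIoc : Ioc 0 b ∈ 𝓝[Icc 0 b] x :=
      mem_nhdsWithin.mpr ⟨Ioi 0, isOpen_Ioi, hx0, fun y hy => ⟨hy.1, hy.2.2⟩⟩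
    exact continuousWithinAt_id.mul ((hf x ⟨hx0, hx.2⟩).mono_of_mem_nhdsWithin hIoc)

lemma ContDiffOn.exists_abs_deriv_le_and_abs_le_mul {w : ℝ → ℝ} {b : ℝ} (hb : 0 < b)
    (hw : ContDiffOn ℝ 1 w (Icc 0 b)) (hw0 : w 0 = 0) :
    ∃ M, (∀ x ∈ Ioo 0 b, |deriv w x| ≤ M) ∧ ∀ x ∈ Icc 0 b, |w x| ≤ M * x := by
  obtain ⟨M, hM⟩ := isCompact_Icc.exists_bound_of_continuousOn
    (hw.continuousOn_derivWithin (uniqueDiffOn_Icc hb) le_rfl)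
  refine ⟨M, fun x hx => ?_, fun x hx => ?_⟩
  · rw [← derivWithin_of_mem_nhds (Icc_mem_nhds hx.1 hx.2)]
    exact hM x (Ioo_subset_Icc_self hx)
  · have := norm_image_sub_le_of_norm_deriv_le_segment'
      (fun y hy => ((hw.differentiableOn one_ne_zero) y hy).hasDerivWithinAt)
      (fun y hy => hM y (Ico_subset_Icc_self hy)) x hx
    simpa [hw0] using this

lemma abs_div_sq_mul_sq_le {x α β A M : ℝ} (hx : 0 ≤ x) (hα : |α| ≤ A) (hβ : |β| ≤ M * x) :
    |α / x ^ 2 * β ^ 2| ≤ A * M ^ 2 := by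
  have hA : 0 ≤ A := (abs_nonneg α).trans hα
  rcases hx.eq_or_lt with rfl | hx
  · simpa using mul_nonneg hA (sq_nonneg M)
  have hβx : |β| / x ≤ |M| := (div_le_iff₀ hx).mpr (hβ.trans (by gcongr; exact le_abs_self M))
  calc |α / x ^ 2 * β ^ 2| = |α| * (|β| / x) ^ 2 := by
        rw [abs_mul, abs_div, abs_pow, abs_pow, abs_of_pos hx, div_pow, sq_abs]; ring
    _ ≤ A * |M| ^ 2 := by gcongr
    _ = A * M ^ 2 := by rw [sq_abs]

lemma hasDerivAt_mul_div_sq_mul_sq {a w : ℝ → ℝ} {x a' w' : ℝ} (hx : x ≠ 0)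
    (ha : HasDerivAt a a' x) (hw : HasDerivAt w w' x) :
    HasDerivAt (fun y => y * (a y / y ^ 2 * w y ^ 2))
      (a' * w x ^ 2 / x + 2 * a x * w x * w' / x - a x / x ^ 2 * w x ^ 2) x := by
  refine ((hasDerivAt_id' x).fun_mul
    ((ha.fun_div (hasDerivAt_pow 2 x) (pow_ne_zero 2 hx)).fun_mul (hw.fun_pow 2))).congr_deriv ?_
  field_simp
  ring

lemma weighted_hardy_pointwise {x α α' β β' K δ : ℝ} (hx : 0 < x) (hδ : 0 < δ) (hα : 0 ≤ α)
    (hKα : x * α' ≤ K * α) :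
    α' * β ^ 2 / x + 2 * α * β * β' / x - α / x ^ 2 * β ^ 2
      ≤ δ⁻¹ * (α * β' ^ 2) - (1 - K - δ) * (α / x ^ 2 * β ^ 2) := by
  set u := β / x
  have hβ : β = x * u := by simp only [u]; field_simp
  have hyoung : 0 ≤ δ⁻¹ * (α * (δ * u - β') ^ 2) := by positivity
  have hfirst : x * α' * u ^ 2 ≤ K * α * u ^ 2 := by gcongr
  rw [hβ]
  field_simp
  field_simp at hyoung
  nlinarith

theorem integral_div_sq_mul_sq_le {a a' w : ℝ → ℝ} {b K δ : ℝ} (hb : 0 < b) (hδ : 0 < δ)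
    (ha : ContinuousOn a (Icc 0 b)) (ha_deriv : ∀ x ∈ Ioo 0 b, HasDerivAt a (a' x) x)
    (ha_nonneg : ∀ x ∈ Ioc 0 b, 0 ≤ a x) (hKa : ∀ x ∈ Ioo 0 b, x * a' x ≤ K * a x)
    (hw : ContDiffOn ℝ 1 w (Icc 0 b)) (hw0 : w 0 = 0) :
    (1 - K - δ) * ∫ x in 0..b, a x / x ^ 2 * w x ^ 2
      ≤ δ⁻¹ * ∫ x in 0..b, a x * deriv w x ^ 2 := by
  obtain ⟨A, hA⟩ := isCompact_Icc.exists_bound_of_continuousOn ha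
  obtain ⟨M, hw'M, hwM⟩ := hw.exists_abs_deriv_le_and_abs_le_mul hb hw0
  have hw'_cont : ContinuousOn (deriv w) (Ioo 0 b) :=
    (hw.mono Ioo_subset_Icc_self).continuousOn_deriv_of_isOpen isOpen_Ioo le_rfl
  have hw_deriv (x : ℝ) (hx : x ∈ Ioo 0 b) : HasDerivAt w (deriv w x) x :=
    ((hw.differentiableOn one_ne_zero).differentiableAt (Icc_mem_nhds hx.1 hx.2)).hasDerivAt
  have hf_bound (x : ℝ) (hx : x ∈ Icc 0 b) : |a x / x ^ 2 * w x ^ 2| ≤ A * M ^ 2 :=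
    abs_div_sq_mul_sq_le hx.1 (hA x hx) (hwM x hx)
  have hf_cont : ContinuousOn (fun x => a x / x ^ 2 * w x ^ 2) (Ioc 0 b) :=
    ((ha.mono Ioc_subset_Icc_self).div (continuousOn_pow 2)
      fun x hx => pow_ne_zero 2 hx.1.ne').mul ((hw.continuousOn.mono Ioc_subset_Icc_self).pow 2)
  have hf_int : IntegrableOn (fun x => a x / x ^ 2 * w x ^ 2) (Icc 0 b) :=
    integrableOn_Icc_of_continuousOn_Ioo_of_abs_le (hf_cont.mono Ioo_subset_Ioc_self)
      fun x hx => hf_bound x (Ioo_subset_Icc_self hx)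
  have hh_int : IntegrableOn (fun x => a x * deriv w x ^ 2) (Icc 0 b) := by
    refine integrableOn_Icc_of_continuousOn_Ioo_of_abs_le (C := A * M ^ 2)
      ((ha.mono Ioo_subset_Icc_self).mul (hw'_cont.pow 2)) fun x hx => ?_
    have haA : |a x| ≤ A := hA x (Ioo_subset_Icc_self hx)
    rw [abs_mul, abs_pow, ← sq_abs M]
    exact mul_le_mul haA (pow_le_pow_left₀ (abs_nonneg _) ((hw'M x hx).trans (le_abs_self M)) 2)
      (by positivity) ((abs_nonneg _).trans haA)
  have hFTC := sub_le_integral_of_hasDeriv_right_of_le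
    (φ := fun x => δ⁻¹ * (a x * deriv w x ^ 2) - (1 - K - δ) * (a x / x ^ 2 * w x ^ 2)) hb.le
    (continuousOn_Icc_mul_of_abs_le hf_cont hf_bound)
    (fun x hx => (hasDerivAt_mul_div_sq_mul_sq hx.1.ne' (ha_deriv x hx)
      (hw_deriv x hx)).hasDerivWithinAt)
    ((hh_int.const_mul δ⁻¹).sub' (hf_int.const_mul (1 - K - δ)))
    fun x hx => weighted_hardy_pointwise hx.1 hδ (ha_nonneg x (Ioo_subset_Ioc_self hx)) (hKa x hx)
  rw [integral_sub
      ((intervalIntegrable_iff_integrableOn_Icc_of_le hb.le).mpr (hh_int.const_mul _))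
      ((intervalIntegrable_iff_integrableOn_Icc_of_le hb.le).mpr (hf_int.const_mul _)),
    intervalIntegral.integral_const_mul, intervalIntegral.integral_const_mul] at hFTC
  have hG_nonneg : 0 ≤ b * (a b / b ^ 2 * w b ^ 2) :=
    have := ha_nonneg b ⟨hb, le_rfl⟩
    by positivity
  simp only [zero_mul, sub_zero] at hFTC
  linarith

theorem stmt_9_general (a a' : ℝ → ℝ) (K : ℝ)
    (hK1 : K < 1)
    (ha_cont : ContinuousOn a (Icc 0 1))
    (ha_deriv : ∀ x ∈ Ioc (0:ℝ) 1, HasDerivAt a (a' x) x)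
    (ha_pos : ∀ x ∈ Ioc (0:ℝ) 1, 0 < a x)
    (hKa : ∀ x ∈ Ioc (0:ℝ) 1, x * a' x ≤ K * a x) :
    ∃ C > 0, ∀ w : ℝ → ℝ, ContDiffOn ℝ 1 w (Icc 0 1) → w 0 = 0 →
      ∫ x in (0:ℝ)..1, (a x / x ^ 2) * (w x) ^ 2
        ≤ C * ∫ x in (0:ℝ)..1, a x * (deriv w x) ^ 2 := by
  set δ := (1 - K) / 2
  have hδ : 0 < δ := by simp only [δ]; linarith
  refine ⟨δ⁻¹ ^ 2, by positivity, fun w hw hw0 => ?_⟩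
  have key := integral_div_sq_mul_sq_le one_pos hδ ha_cont
    (fun x hx => ha_deriv x (Ioo_subset_Ioc_self hx)) (fun x hx => (ha_pos x hx).le)
    (fun x hx => hKa x (Ioo_subset_Ioc_self hx)) hw hw0
  rw [show 1 - K - δ = δ by simp only [δ]; ring] at key
  calc ∫ x in (0:ℝ)..1, a x / x ^ 2 * w x ^ 2
      = δ⁻¹ * (δ * ∫ x in (0:ℝ)..1, a x / x ^ 2 * w x ^ 2) := by field_simp
    _ ≤ δ⁻¹ * (δ⁻¹ * ∫ x in (0:ℝ)..1, a x * deriv w x ^ 2) := by gcongr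
    _ = δ⁻¹ ^ 2 * ∫ x in (0:ℝ)..1, a x * deriv w x ^ 2 := by ring

/-- Hardy–Poincaré inequality for weakly degenerate weights: there exists `C > 0`
such that for every `w ∈ C¹([0,1])` with `w(0) = 0`,
`∫₀¹ (a(x)/x²) w(x)² dx ≤ C ∫₀¹ a(x) w'(x)² dx`. -/
theorem stmt_9 (a a' : ℝ → ℝ) (K : ℝ)
    (hK0 : 0 ≤ K) (hK1 : K < 1)
    (ha_cont : ContinuousOn a (Icc 0 1))
    (ha_deriv : ∀ x ∈ Ioc (0:ℝ) 1, HasDerivAt a (a' x) x)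
    (ha'_cont : ContinuousOn a' (Ioc 0 1))
    (ha0 : a 0 = 0)
    (ha_pos : ∀ x ∈ Ioc (0:ℝ) 1, 0 < a x)
    (ha'_nonneg : ∀ x ∈ Ioc (0:ℝ) 1, 0 ≤ a' x)
    (hKa : ∀ x ∈ Ioc (0:ℝ) 1, x * a' x ≤ K * a x) :
    ∃ C > 0, ∀ w : ℝ → ℝ, ContDiffOn ℝ 1 w (Icc 0 1) → w 0 = 0 →
      ∫ x in (0:ℝ)..1, (a x / x ^ 2) * (w x) ^ 2
        ≤ C * ∫ x in (0:ℝ)..1, a x * (deriv w x) ^ 2 :=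
  stmt_9_general a a' K hK1 ha_cont ha_deriv ha_pos hKa
end
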